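/- arXiv:0712.1266 — 7 statements merged into one kernel-verified Lean document; each statement's English description precedes it below -/
import Mathlib

section
/- Let a ∈ ℝ and let h be a function with h(conj s) = conj(h(s)), holomorphic and nonvanishing on the line Re s = a, with h(a) > 0. Let φ(τ) be the continuous determination of arg h(a+iτ) with φ(0)=0. Then for the function f(s) = h(s) − h(2a−s), a point s = a+iτ with τ ∈ ℝ is a zero of f if and only if φ(τ) ≡ 0 (mod π); and for f(s) = h(s) + h(2a−s), s = a+iτ is a zero of f if and only if φ(τ) ≡ π/2 (mod π). -/
open Complex

/-! Reflection in the line `Re s = a` is complex conjugation, so by the reality condition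
`h(2a - s) = conj (h s)` on that line. Hence `h(s) ∓ h(2a - s)` is `2i Im h(s)`, resp. `2 Re h(s)`,
and writing `h(s) = |h(s)| e^{iφ}` with `|h(s)| ≠ 0`, these vanish exactly when
`sin φ = 0`, resp. `cos φ = 0`. -/

theorem Real.cos_eq_zero_iff_exists_int {θ : ℝ} :
    Real.cos θ = 0 ↔ ∃ k : ℤ, θ = Real.pi / 2 + k * Real.pi := by
  rw [Real.cos_eq_zero_iff]
  refine exists_congr fun k => ?_
  constructor <;> intro hk <;> rw [hk] <;> ring

namespace Complex

open ComplexConjugate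

theorem two_mul_ofReal_sub_eq_conj (a τ : ℝ) :
    2 * (a : ℂ) - (a + τ * I) = conj ((a : ℂ) + τ * I) := by
  apply Complex.ext <;> simp; ring

theorem im_of_polar {z : ℂ} {θ : ℝ} (hpolar : z = ‖z‖ * exp (θ * I)) :
    z.im = ‖z‖ * Real.sin θ := by
  conv_lhs => rw [hpolar]
  rw [im_ofReal_mul, exp_ofReal_mul_I_im]

theorem re_of_polar {z : ℂ} {θ : ℝ} (hpolar : z = ‖z‖ * exp (θ * I)) :
    z.re = ‖z‖ * Real.cos θ := by
  conv_lhs => rw [hpolar]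
  rw [re_ofReal_mul, exp_ofReal_mul_I_re]

theorem sub_conj_eq_zero_iff_of_polar {z : ℂ} {θ : ℝ} (hz : z ≠ 0)
    (hpolar : z = ‖z‖ * exp (θ * I)) :
    z - conj z = 0 ↔ ∃ k : ℤ, θ = k * Real.pi := by
  rw [sub_conj, mul_eq_zero, or_iff_left I_ne_zero, ofReal_eq_zero, im_of_polar hpolar,
    mul_eq_zero_iff_left two_ne_zero, mul_eq_zero_iff_left (norm_ne_zero_iff.mpr hz),
    Real.sin_eq_zero_iff]
  exact exists_congr fun k => eq_comm

theorem add_conj_eq_zero_iff_of_polar {z : ℂ} {θ : ℝ} (hz : z ≠ 0)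
    (hpolar : z = ‖z‖ * exp (θ * I)) :
    z + conj z = 0 ↔ ∃ k : ℤ, θ = Real.pi / 2 + k * Real.pi := by
  rw [add_conj, ofReal_eq_zero, re_of_polar hpolar, mul_eq_zero_iff_left two_ne_zero,
    mul_eq_zero_iff_left (norm_ne_zero_iff.mpr hz), Real.cos_eq_zero_iff_exists_int]

end Complex

theorem stmt_3_general (a : ℝ) (h : ℂ → ℂ) (φ : ℝ → ℝ)
    (hreal : ∀ s : ℂ, h (starRingEnd ℂ s) = starRingEnd ℂ (h s))
    (hne : ∀ τ : ℝ, h ((a : ℂ) + τ * I) ≠ 0)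
    (hpolar : ∀ τ : ℝ, h ((a : ℂ) + τ * I) =
      (‖h ((a : ℂ) + τ * I)‖ : ℂ) * Complex.exp (φ τ * I)) :
    ∀ τ : ℝ,
      (h ((a : ℂ) + τ * I) - h (2 * a - ((a : ℂ) + τ * I)) = 0 ↔
        ∃ k : ℤ, φ τ = k * Real.pi) ∧
      (h ((a : ℂ) + τ * I) + h (2 * a - ((a : ℂ) + τ * I)) = 0 ↔
        ∃ k : ℤ, φ τ = Real.pi / 2 + k * Real.pi) := by
  intro τ
  rw [two_mul_ofReal_sub_eq_conj, hreal]
  exact ⟨sub_conj_eq_zero_iff_of_polar (hne τ) (hpolar τ),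
    add_conj_eq_zero_iff_of_polar (hne τ) (hpolar τ)⟩

theorem stmt_3 (a : ℝ) (h : ℂ → ℂ) (φ : ℝ → ℝ)
    (hholo : ∀ τ : ℝ, DifferentiableAt ℂ h ((a : ℂ) + τ * I))
    (hreal : ∀ s : ℂ, h (starRingEnd ℂ s) = starRingEnd ℂ (h s))
    (hne : ∀ τ : ℝ, h ((a : ℂ) + τ * I) ≠ 0)
    (hpos : 0 < (h (a : ℂ)).re)
    (hφc : Continuous φ) (hφ0 : φ 0 = 0)
    (hpolar : ∀ τ : ℝ, h ((a : ℂ) + τ * I) =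
      (‖h ((a : ℂ) + τ * I)‖ : ℂ) * Complex.exp (φ τ * I)) :
    ∀ τ : ℝ,
      (h ((a : ℂ) + τ * I) - h (2 * a - ((a : ℂ) + τ * I)) = 0 ↔
        ∃ k : ℤ, φ τ = k * Real.pi) ∧
      (h ((a : ℂ) + τ * I) + h (2 * a - ((a : ℂ) + τ * I)) = 0 ↔
        ∃ k : ℤ, φ τ = Real.pi / 2 + k * Real.pi) :=
  stmt_3_general a h φ hreal hne hpolar
end

section
/- Let a ∈ ℝ, h as above (real symmetric, nonvanishing on Re s = a, h(a) > 0), f⁻(s) = h(s) − h(2a−s), and let φ(τ) = arg h(a+iτ) be continuous with φ(0)=0. Then the number N₀'(T) of distinct zeros of f⁻ on the segment {a+iτ : 0 < τ < T} satisfies N₀'(T) ≥ (1/π) φ(T) − 1 for every T > 0. -/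
/-!
On the line `Re s = a` the reflection `s ↦ 2a - s` is complex conjugation, so for a real-symmetric
`h` the difference `h s - h (2a - s)` is `2i · Im h s`, which vanishes whenever the argument `φ τ`
of `h (a + iτ)` is a multiple of `π`. Starting from `φ 0 = 0`, the intermediate value theorem
gives a distinct such `τ ∈ (0, T)` for each multiple of `π` strictly between `0` and `φ T`.
-/

open Complex

theorem ContinuousOn.sub_sub_one_le_ncard {f : ℝ → ℝ} {a b : ℝ} (hab : a ≤ b)
    (hf : ContinuousOn f (Set.Icc a b)) {S : Set ℝ} (hS : S.Finite)
    (hmem : ∀ x ∈ Set.Ioo a b, (∃ k : ℤ, f x = k) → x ∈ S) :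
    f b - f a - 1 ≤ S.ncard := by
  have hex : ∀ k ∈ Finset.Ioo ⌊f a⌋ ⌈f b⌉, ∃ x ∈ Set.Ioo a b, f x = k := by
    intro k hk
    rw [Finset.mem_Ioo] at hk
    exact intermediate_value_Ioo hab hf ⟨Int.floor_lt.mp hk.1, Int.lt_ceil.mp hk.2⟩
  choose! g hg hgk using hex
  have hcard : (Finset.Ioo ⌊f a⌋ ⌈f b⌉).card ≤ S.ncard := by
    rw [Set.ncard_eq_toFinset_card S hS]
    refine Finset.card_le_card_of_injOn g (fun k hk ↦ ?_) fun k hk l hl hkl ↦ ?_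
    · simpa using hmem _ (hg k hk) ⟨k, hgk k hk⟩
    · exact_mod_cast (hgk k hk).symm.trans (hkl ▸ hgk l hl)
  rw [Int.card_Ioo] at hcard
  calc f b - f a - 1 ≤ ((⌈f b⌉ - ⌊f a⌋ - 1 : ℤ) : ℝ) := by
        push_cast
        linarith [Int.le_ceil (f b), Int.floor_le (f a)]
    _ ≤ ((⌈f b⌉ - ⌊f a⌋ - 1).toNat : ℝ) := by exact_mod_cast Int.self_le_toNat _
    _ ≤ S.ncard := by exact_mod_cast hcard

theorem sub_apply_two_mul_sub_eq_zero_iff {h : ℂ → ℂ}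
    (hreal : ∀ s : ℂ, h (starRingEnd ℂ s) = starRingEnd ℂ (h s)) (a τ : ℝ) :
    h ((a : ℂ) + τ * I) - h (2 * a - ((a : ℂ) + τ * I)) = 0 ↔ (h ((a : ℂ) + τ * I)).im = 0 := by
  have hconj : (2 * a : ℂ) - ((a : ℂ) + τ * I) = starRingEnd ℂ ((a : ℂ) + τ * I) := by
    apply Complex.ext <;> simp; ring
  rw [hconj, hreal, Complex.sub_conj]
  simp

theorem Complex.im_eq_zero_of_eq_norm_mul_exp_int_mul_pi {z : ℂ} {θ : ℝ}
    (hz : z = (‖z‖ : ℂ) * exp (θ * I)) (hθ : ∃ k : ℤ, θ = k * Real.pi) : z.im = 0 := by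
  obtain ⟨k, rfl⟩ := hθ
  rw [hz, Complex.im_ofReal_mul, Complex.exp_ofReal_mul_I_im, Real.sin_int_mul_pi, mul_zero]

theorem stmt_4_general (a : ℝ) (h : ℂ → ℂ) (φ : ℝ → ℝ)
    (hreal : ∀ s : ℂ, h (starRingEnd ℂ s) = starRingEnd ℂ (h s))
    (hφc : Continuous φ) (hφ0 : φ 0 = 0)
    (hpolar : ∀ τ : ℝ, h ((a : ℂ) + τ * I) =
      ((‖h ((a : ℂ) + τ * I)‖ : ℝ) : ℂ) * Complex.exp (φ τ * I)) :
    ∀ T : ℝ, 0 < T →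
      {τ : ℝ | 0 < τ ∧ τ < T ∧
          h ((a : ℂ) + τ * I) - h (2 * a - ((a : ℂ) + τ * I)) = 0}.Infinite ∨
      (1 / Real.pi) * φ T - 1 ≤
        (({τ : ℝ | 0 < τ ∧ τ < T ∧
          h ((a : ℂ) + τ * I) - h (2 * a - ((a : ℂ) + τ * I)) = 0}).ncard : ℝ) := by
  intro T hT
  refine (Set.finite_or_infinite _).elim (fun hS ↦ Or.inr ?_) Or.inl
  have hmem : ∀ τ ∈ Set.Ioo 0 T, (∃ k : ℤ, φ τ / Real.pi = k) →
      0 < τ ∧ τ < T ∧ h ((a : ℂ) + τ * I) - h (2 * a - ((a : ℂ) + τ * I)) = 0 := by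
    rintro τ ⟨hτ0, hτT⟩ ⟨k, hk⟩
    refine ⟨hτ0, hτT, (sub_apply_two_mul_sub_eq_zero_iff hreal a τ).mpr ?_⟩
    refine Complex.im_eq_zero_of_eq_norm_mul_exp_int_mul_pi (hpolar τ) ⟨k, ?_⟩
    rwa [div_eq_iff Real.pi_ne_zero] at hk
  have := (hφc.div_const Real.pi).continuousOn.sub_sub_one_le_ncard hT.le hS hmem
  simpa [hφ0, div_eq_inv_mul] using this

theorem stmt_4 (a : ℝ) (h : ℂ → ℂ) (φ : ℝ → ℝ)
    (hholo : ∀ τ : ℝ, DifferentiableAt ℂ h ((a : ℂ) + τ * I))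
    (hreal : ∀ s : ℂ, h (starRingEnd ℂ s) = starRingEnd ℂ (h s))
    (hne : ∀ τ : ℝ, h ((a : ℂ) + τ * I) ≠ 0)
    (hpos : 0 < (h (a : ℂ)).re)
    (hφc : Continuous φ) (hφ0 : φ 0 = 0)
    (hpolar : ∀ τ : ℝ, h ((a : ℂ) + τ * I) =
      ((‖h ((a : ℂ) + τ * I)‖ : ℝ) : ℂ) * Complex.exp (φ τ * I)) :
    ∀ T : ℝ, 0 < T →
      {τ : ℝ | 0 < τ ∧ τ < T ∧
          h ((a : ℂ) + τ * I) - h (2 * a - ((a : ℂ) + τ * I)) = 0}.Infinite ∨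
      (1 / Real.pi) * φ T - 1 ≤
        (({τ : ℝ | 0 < τ ∧ τ < T ∧
          h ((a : ℂ) + τ * I) - h (2 * a - ((a : ℂ) + τ * I)) = 0}).ncard : ℝ) :=
  stmt_4_general a h φ hreal hφc hφ0 hpolar
end

section
/- Let a ∈ ℝ, h real symmetric, nonvanishing on Re s = a, with h(a) > 0, f⁺(s) = h(s) + h(2a−s), and φ(τ) = arg h(a+iτ) continuous with φ(0)=0. Then the number N₀'(T) of distinct zeros of f⁺ on {a+iτ : 0 < τ < T} satisfies N₀'(T) ≥ (1/π) φ(T) − 1/2 for all T > 0; moreover f⁺(a) = 2h(a) ≠ 0, so s = a is not a zero of f⁺. -/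
/-!
On the line `Re s = a` the reflection `s ↦ 2a - s` is complex conjugation, so for a real-symmetric
`h` we get `f⁺(a + iτ) = 2 Re h(a + iτ) = 2 |h(a + iτ)| cos φ(τ)`, which vanishes whenever
`φ(τ) ≡ π/2 (mod π)`. Starting from `φ(0) = 0`, the continuous `φ` takes each value `(k + 1/2)π`
below `φ(T)` somewhere in `(0, T)` (intermediate value theorem), at pairwise distinct points; there
are `⌈φ(T)/π - 1/2⌉` such values. At `s = a` itself `f⁺(a) = 2h(a)` has positive real part.
-/

open Complex Set

lemma re_eq_zero_of_eq_norm_mul_exp {z : ℂ} {θ : ℝ} (hz : z = ‖z‖ * exp (θ * I))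
    (hθ : Real.cos θ = 0) : z.re = 0 := by
  rw [hz, re_ofReal_mul, exp_ofReal_mul_I_re, hθ, mul_zero]

lemma apply_add_apply_reflect_eq {h : ℂ → ℂ}
    (hreal : ∀ s : ℂ, h (starRingEnd ℂ s) = starRingEnd ℂ (h s)) (a τ : ℝ) :
    h (a + τ * I) + h (2 * a - (a + τ * I)) = ↑(2 * (h (a + τ * I)).re) := by
  have hreflect : 2 * (a : ℂ) - (a + τ * I) = starRingEnd ℂ (a + τ * I) := by
    apply Complex.ext
    · simp; ring
    · simp
  rw [hreflect, hreal, add_conj]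

lemma exists_mem_Ioo_eq_half_add_mul_pi {φ : ℝ → ℝ} {T : ℝ} (hT : 0 ≤ T)
    (hφ : ContinuousOn φ (Icc 0 T)) (hφ0 : φ 0 = 0) {k : ℕ}
    (hk : k < ⌈φ T / Real.pi - 1 / 2⌉₊) :
    ∃ τ ∈ Ioo 0 T, φ τ = (k + 1 / 2) * Real.pi := by
  have hlt : ((k : ℝ) + 1 / 2) * Real.pi < φ T := by
    rw [Nat.lt_ceil, lt_sub_iff_add_lt, lt_div_iff₀ Real.pi_pos] at hk
    exact hk
  have hmem : ((k : ℝ) + 1 / 2) * Real.pi ∈ Ioo (φ 0) (φ T) :=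
    ⟨by rw [hφ0]; positivity, hlt⟩
  exact intermediate_value_Ioo hT hφ hmem

lemma sub_half_le_ncard_of_cos_eq_zero {φ : ℝ → ℝ} {T : ℝ} (hT : 0 ≤ T)
    (hφ : ContinuousOn φ (Icc 0 T)) (hφ0 : φ 0 = 0) {S : Set ℝ} (hS : S.Finite)
    (hsub : ∀ τ ∈ Ioo 0 T, Real.cos (φ τ) = 0 → τ ∈ S) :
    φ T / Real.pi - 1 / 2 ≤ S.ncard := by
  set n := ⌈φ T / Real.pi - 1 / 2⌉₊
  choose! g hgT hgφ using fun k (hk : k ∈ Iio n) ↦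
    exists_mem_Ioo_eq_half_add_mul_pi hT hφ hφ0 hk
  have hgS : ∀ k ∈ Iio n, g k ∈ S := fun k hk ↦ by
    refine hsub _ (hgT k hk) (Real.cos_eq_zero_iff.mpr ⟨k, ?_⟩)
    rw [hgφ k hk]
    push_cast
    ring
  have hginj : InjOn g (Iio n) := fun i hi j hj hij ↦ by
    have := hgφ i hi
    rw [hij, hgφ j hj] at this
    have hji : (j : ℝ) = i := add_right_cancel (mul_right_cancel₀ Real.pi_ne_zero this)
    exact_mod_cast hji.symm
  have hcard : n ≤ S.ncard := by
    simpa using ncard_le_ncard_of_injOn g hgS hginj hS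
  exact (Nat.le_ceil _).trans (by exact_mod_cast hcard)

theorem stmt_5_general (a : ℝ) (h : ℂ → ℂ) (φ : ℝ → ℝ)
    (hreal : ∀ s : ℂ, h (starRingEnd ℂ s) = starRingEnd ℂ (h s))
    (hpos : 0 < (h (a : ℂ)).re)
    (hφc : Continuous φ) (hφ0 : φ 0 = 0)
    (hpolar : ∀ τ : ℝ, h ((a : ℂ) + τ * I) =
      (‖h ((a : ℂ) + τ * I)‖ : ℂ) * Complex.exp (φ τ * I)) :
    (h (a : ℂ) + h (2 * a - (a : ℂ)) ≠ 0) ∧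
    ∀ T : ℝ, 0 < T →
      {τ : ℝ | 0 < τ ∧ τ < T ∧
          h ((a : ℂ) + τ * I) + h (2 * a - ((a : ℂ) + τ * I)) = 0}.Infinite ∨
      (1 / Real.pi) * φ T - 1 / 2 ≤
        (({τ : ℝ | 0 < τ ∧ τ < T ∧
          h ((a : ℂ) + τ * I) + h (2 * a - ((a : ℂ) + τ * I)) = 0}).ncard : ℝ) := by
  refine ⟨fun hzero ↦ ?_, fun T hT ↦ ?_⟩
  · have := congrArg re hzero
    rw [show 2 * (a : ℂ) - a = a by ring, add_re, zero_re] at this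
    linarith
  · rw [one_div_mul_eq_div, or_iff_not_imp_left, Set.not_infinite]
    refine fun hfin ↦ sub_half_le_ncard_of_cos_eq_zero hT.le hφc.continuousOn hφ0 hfin ?_
    intro τ ⟨hτ0, hτT⟩ hcos
    refine ⟨hτ0, hτT, ?_⟩
    rw [apply_add_apply_reflect_eq hreal, re_eq_zero_of_eq_norm_mul_exp (hpolar τ) hcos]
    simp

theorem stmt_5 (a : ℝ) (h : ℂ → ℂ) (φ : ℝ → ℝ)
    (hholo : ∀ τ : ℝ, DifferentiableAt ℂ h ((a : ℂ) + τ * I))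
    (hreal : ∀ s : ℂ, h (starRingEnd ℂ s) = starRingEnd ℂ (h s))
    (hne : ∀ τ : ℝ, h ((a : ℂ) + τ * I) ≠ 0)
    (hpos : 0 < (h (a : ℂ)).re)
    (hφc : Continuous φ) (hφ0 : φ 0 = 0)
    (hpolar : ∀ τ : ℝ, h ((a : ℂ) + τ * I) =
      (‖h ((a : ℂ) + τ * I)‖ : ℂ) * Complex.exp (φ τ * I)) :
    (h (a : ℂ) + h (2 * a - (a : ℂ)) ≠ 0) ∧
    ∀ T : ℝ, 0 < T →
      {τ : ℝ | 0 < τ ∧ τ < T ∧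
          h ((a : ℂ) + τ * I) + h (2 * a - ((a : ℂ) + τ * I)) = 0}.Infinite ∨
      (1 / Real.pi) * φ T - 1 / 2 ≤
        (({τ : ℝ | 0 < τ ∧ τ < T ∧
          h ((a : ℂ) + τ * I) + h (2 * a - ((a : ℂ) + τ * I)) = 0}).ncard : ℝ) :=
  stmt_5_general a h φ hreal hpos hφc hφ0 hpolar
end

section
/- Let p(z) = a₀zⁿ + a₁z^{n−1} + ⋯ + aₙ be a real polynomial with a₀ > 0 whose roots all have negative real part (a stable polynomial). Then all coefficients aᵢ are strictly positive (Stodola's theorem). -/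
/-!
Induction on the degree. A stable real polynomial of positive degree has a complex root `z` with
`re z < 0`, hence a monic real factor `X - z` (if `z` is real) or `X² - 2 (re z) X + |z|²`
(otherwise), whose coefficients are all positive. The cofactor is again stable with positive
leading coefficient, and a product of polynomials with positive coefficients has positive
coefficients.
-/

open Polynomial

section OrderedRing

variable {R : Type*}

theorem Polynomial.coeff_mul_pos [Semiring R] [PartialOrder R] [IsStrictOrderedRing R]
    {f g : R[X]} (hf : ∀ i ≤ f.natDegree, 0 < f.coeff i) (hg : ∀ i ≤ g.natDegree, 0 < g.coeff i) :
    ∀ i ≤ (f * g).natDegree, 0 < (f * g).coeff i := by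
  have nonneg {h : R[X]} (hh : ∀ i ≤ h.natDegree, 0 < h.coeff i) (i : ℕ) : 0 ≤ h.coeff i := by
    rcases le_or_gt i h.natDegree with hi | hi
    · exact (hh i hi).le
    · rw [coeff_eq_zero_of_natDegree_lt hi]
  intro k hk
  have hk' : k ≤ f.natDegree + g.natDegree := hk.trans natDegree_mul_le
  rw [coeff_mul]
  refine Finset.sum_pos' (fun x _ => mul_nonneg (nonneg hf _) (nonneg hg _)) ?_
  -- with `m = min k (deg f)`, both indices of the summand `f_m g_(k-m)` are in range
  refine ⟨(min k f.natDegree, k - min k f.natDegree), ?_, ?_⟩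
  · rw [Finset.HasAntidiagonal.mem_antidiagonal]
    omega
  · exact mul_pos (hf _ (min_le_right _ _)) (hg _ (by omega))

theorem Polynomial.natDegree_X_sq_sub_C_mul_X_add_C [Ring R] [Nontrivial R] (b c : R) :
    (X ^ 2 - C b * X + C c).natDegree = 2 := by
  compute_degree!

variable [Ring R] [PartialOrder R] [IsStrictOrderedRing R]

theorem Polynomial.coeff_X_sub_C_pos {r : R} (hr : r < 0) :
    ∀ i ≤ (X - C r).natDegree, 0 < (X - C r).coeff i := by
  intro i hi
  rw [natDegree_X_sub_C] at hi
  interval_cases i <;> simp [hr]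

theorem Polynomial.coeff_X_sq_sub_C_mul_X_add_C_pos {b c : R} (hb : b < 0) (hc : 0 < c) :
    ∀ i ≤ (X ^ 2 - C b * X + C c).natDegree, 0 < (X ^ 2 - C b * X + C c).coeff i := by
  intro i hi
  rw [natDegree_X_sq_sub_C_mul_X_add_C] at hi
  interval_cases i <;> simp [coeff_X, coeff_C, hb, hc]

end OrderedRing

theorem Polynomial.exists_monic_dvd_coeff_pos_of_aeval_eq_zero {p : ℝ[X]} {z : ℂ}
    (hz : aeval z p = 0) (hre : z.re < 0) :
    ∃ f : ℝ[X], f.Monic ∧ 0 < f.natDegree ∧ (∀ i ≤ f.natDegree, 0 < f.coeff i) ∧ f ∣ p := by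
  rcases eq_or_ne z.im 0 with him | him
  · lift z to ℝ using him
    rw [← Complex.coe_algebraMap, aeval_algebraMap_apply, Complex.coe_algebraMap,
      Complex.ofReal_eq_zero] at hz
    exact ⟨X - C z, monic_X_sub_C z, by simp, coeff_X_sub_C_pos (by simpa using hre),
      dvd_iff_isRoot.mpr hz⟩
  · have hz0 : 0 < ‖z‖ := norm_pos_iff.mpr fun h => him (by simp [h])
    refine ⟨X ^ 2 - C (2 * z.re) * X + C (‖z‖ ^ 2), by monicity!,
      by rw [natDegree_X_sq_sub_C_mul_X_add_C]; norm_num,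
      coeff_X_sq_sub_C_mul_X_add_C_pos (by linarith) (by positivity),
      p.quadratic_dvd_of_aeval_eq_zero_im_ne_zero hz him⟩

theorem stmt_7_general (p : Polynomial ℝ)
    (hlead : 0 < p.leadingCoeff)
    (hstable : ∀ ρ : ℂ, (Polynomial.aeval ρ) p = 0 → ρ.re < 0) :
    ∀ i ≤ p.natDegree, 0 < p.coeff i := by
  induction hn : p.natDegree using Nat.strong_induction_on generalizing p with
  | _ n ih =>
  rcases Nat.eq_zero_or_pos n with rfl | hpos
  · intro i hi
    rw [Nat.le_zero.mp hi, ← hn]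
    exact hlead
  obtain ⟨z, hz⟩ :=
    IsAlgClosed.exists_aeval_eq_zero ℂ p (natDegree_pos_iff_degree_pos.mp (hn ▸ hpos)).ne'
  obtain ⟨f, hf, hfdeg, hfpos, q, rfl⟩ :=
    exists_monic_dvd_coeff_pos_of_aeval_eq_zero hz (hstable z hz)
  have hq0 : q ≠ 0 := by rintro rfl; simp at hlead
  rw [leadingCoeff_monic_mul hf] at hlead
  have hqstable : ∀ ρ : ℂ, aeval ρ q = 0 → ρ.re < 0 := fun ρ hρ =>
    hstable ρ (by rw [map_mul, hρ, mul_zero])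
  have hqdeg : q.natDegree < n := by rw [← hn, natDegree_mul hf.ne_zero hq0]; omega
  exact hn ▸ coeff_mul_pos hfpos (ih _ hqdeg q hlead hqstable rfl)

theorem stmt_7 (p : Polynomial ℝ) (hdeg : 1 ≤ p.natDegree)
    (hlead : 0 < p.leadingCoeff)
    (hstable : ∀ ρ : ℂ, (Polynomial.aeval ρ) p = 0 → ρ.re < 0) :
    ∀ i ≤ p.natDegree, 0 < p.coeff i :=
  stmt_7_general p hlead hstable
end

section
/- Let h be an entire function of genus 0 or 1 whose zeros all lie in the vertical strip |Re s − a| < b (for some real a and b > 0), real on the real line, satisfying h(2a − s) = ε h(s) with ε = ±1 (so zeros come in pairs ρ, 2a − conj ρ). Then for every α ≥ b and every s with Re s > a, |h(s − α)| < |h(s + α)|. -/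
open Complex Filter Finset Topology ComplexConjugate

/-! Put `u = s - a`. Schwarz reflection and the functional equation give `|h (2a - conj w)| = |h w|`,
so `|h (s ∓ α)|²` is the limit of `|P_N v| |P_N (-conj v)|` at `v = u ∓ α`, where `P_N` is the
partial Hadamard product centred at `a`. In this reflected pair the exponential factors depend on `v`
only through `v - conj v`, which is the same for both choices of `v`, while a zero `z` contributes
`|z - v| |z + conj v|`, strictly larger at `v = u + α` than at `v = u - α` because `|Re z| < α` and
`Re u > 0`. Keeping the factor of one zero aside makes the inequality survive the limit strictly,
since `h (s + α) ≠ 0`. -/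

theorem Differentiable.apply_conj_of_forall_im_eq_zero {h : ℂ → ℂ} (hdiff : Differentiable ℂ h)
    (hreal : ∀ x : ℝ, (h x).im = 0) (z : ℂ) : h (conj z) = conj (h z) := by
  have hconj : Differentiable ℂ (conj ∘ h ∘ conj) := fun w => by
    simpa using (hdiff (conj w)).conj_conj
  have hofReal : Tendsto ((↑) : ℝ → ℂ) (𝓝[≠] 0) (𝓝[≠] ((0 : ℝ) : ℂ)) :=
    continuous_ofReal.continuousWithinAt.tendsto_nhdsWithin fun _ ↦ by simp
  have hfreq : ∃ᶠ w in 𝓝[≠] ((0 : ℝ) : ℂ), h w = (conj ∘ h ∘ conj) w :=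
    hofReal.frequently (Frequently.of_forall fun x => by simp [conj_eq_iff_im.mpr (hreal x)])
  have := AnalyticOnNhd.eq_of_frequently_eq (analyticOnNhd_univ_iff_differentiable.2 hdiff)
    (analyticOnNhd_univ_iff_differentiable.2 hconj) hfreq
  simpa using congrFun this (conj z)

noncomputable def weierstrassFactor (z v : ℂ) : ℂ := (1 - v / z) * exp (v / z)

noncomputable def hadamardPartialProduct (m : ℕ) (A B : ℂ) (z : ℕ → ℂ) (N : ℕ) (v : ℂ) : ℂ :=
  v ^ m * exp (A + B * v) * ∏ n ∈ range N, weierstrassFactor (z n) v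

noncomputable def reflectedPairNorm (f : ℂ → ℂ) (v : ℂ) : ℝ := ‖f v‖ * ‖f (-conj v)‖

lemma reflectedPairNorm_nonneg (f : ℂ → ℂ) (v : ℂ) : 0 ≤ reflectedPairNorm f v := by
  unfold reflectedPairNorm; positivity

lemma reflectedPairNorm_hadamardPartialProduct (m : ℕ) (A B : ℂ) (z : ℕ → ℂ) (N : ℕ) (v : ℂ) :
    reflectedPairNorm (hadamardPartialProduct m A B z N) v =
      reflectedPairNorm (fun v => v ^ m * exp (A + B * v)) v *
        ∏ n ∈ range N, reflectedPairNorm (weierstrassFactor (z n)) v := by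
  simp only [reflectedPairNorm, hadamardPartialProduct, norm_mul, norm_prod, prod_mul_distrib]
  ring

lemma reflectedPairNorm_monomial_mul_exp (m : ℕ) (A B v : ℂ) :
    reflectedPairNorm (fun v => v ^ m * exp (A + B * v)) v =
      ‖v‖ ^ (2 * m) * ‖exp (2 * A + B * (v - conj v))‖ := by
  have hexp : exp (A + B * v) * exp (A + B * -conj v) = exp (2 * A + B * (v - conj v)) := by
    rw [← exp_add]; ring_nf
  rw [reflectedPairNorm, norm_mul, norm_mul, norm_pow, norm_pow, norm_neg, norm_conj, ← hexp,
    norm_mul]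
  ring

lemma reflectedPairNorm_weierstrassFactor {z : ℂ} (hz : z ≠ 0) (v : ℂ) :
    reflectedPairNorm (weierstrassFactor z) v =
      ‖(z - v) * (z + conj v)‖ * (‖exp ((v - conj v) / z)‖ / ‖z‖ ^ 2) := by
  have hprod : weierstrassFactor z v * weierstrassFactor z (-conj v) =
      (z - v) * (z + conj v) * (exp ((v - conj v) / z) / z ^ 2) := by
    rw [weierstrassFactor, weierstrassFactor, sub_eq_add_neg v, add_div, exp_add]
    field_simp
    ring
  rw [reflectedPairNorm, ← norm_mul, hprod, norm_mul, norm_div, norm_pow]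

lemma norm_sub_ofReal_le_norm_add_ofReal {u : ℂ} {α : ℝ} (hu : 0 ≤ u.re) (hα : 0 ≤ α) :
    ‖u - α‖ ≤ ‖u + α‖ := by
  rw [← sq_le_sq₀ (norm_nonneg _) (norm_nonneg _), Complex.sq_norm, Complex.sq_norm, normSq_apply, normSq_apply]
  simp only [sub_re, sub_im, add_re, add_im, ofReal_re, ofReal_im, sub_zero, add_zero]
  nlinarith [mul_nonneg hu hα]

/-- With `z = x + iy`, `u = σ + it`, the difference of the squares of the two sides is
`8ασ (α² - x² + σ² + (y - t)²)`. -/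
lemma norm_mul_sub_ofReal_lt_norm_mul_add_ofReal {z u : ℂ} {α : ℝ} (hz : |z.re| < α)
    (hu : 0 < u.re) :
    ‖(z - (u - α)) * (z + conj (u - α))‖ < ‖(z - (u + α)) * (z + conj (u + α))‖ := by
  have hα : 0 < α := (abs_nonneg _).trans_lt hz
  have hx : z.re ^ 2 < α ^ 2 := sq_lt_sq' (abs_lt.1 hz).1 (abs_lt.1 hz).2
  refine lt_of_pow_lt_pow_left₀ 2 (norm_nonneg _) ?_
  rw [norm_mul, norm_mul, mul_pow, mul_pow, Complex.sq_norm, Complex.sq_norm, Complex.sq_norm,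
    Complex.sq_norm]
  simp only [normSq_apply, sub_re, sub_im, add_re, add_im, conj_re, conj_im, ofReal_re, ofReal_im,
    sub_zero, add_zero]
  nlinarith [mul_pos (mul_pos hα hu) (add_pos_of_pos_of_nonneg (sub_pos.2 hx)
    (add_nonneg (sq_nonneg u.re) (sq_nonneg (z.im - u.im))))]

lemma reflectedPairNorm_weierstrassFactor_lt {z u : ℂ} {α : ℝ} (hz : z ≠ 0) (hzα : |z.re| < α)
    (hu : 0 < u.re) :
    reflectedPairNorm (weierstrassFactor z) (u - α) <
      reflectedPairNorm (weierstrassFactor z) (u + α) := by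
  have hsym : u - α - conj (u - α) = u + α - conj (u + α) := by
    simp only [map_sub, map_add, conj_ofReal]; ring
  rw [reflectedPairNorm_weierstrassFactor hz, reflectedPairNorm_weierstrassFactor hz, hsym]
  exact mul_lt_mul_of_pos_right (norm_mul_sub_ofReal_lt_norm_mul_add_ofReal hzα hu)
    (div_pos (norm_pos_iff.2 (exp_ne_zero _)) (pow_pos (norm_pos_iff.2 hz) 2))

lemma reflectedPairNorm_monomial_mul_exp_le (m : ℕ) (A B : ℂ) {u : ℂ} {α : ℝ} (hu : 0 ≤ u.re)
    (hα : 0 ≤ α) :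
    reflectedPairNorm (fun v => v ^ m * exp (A + B * v)) (u - α) ≤
      reflectedPairNorm (fun v => v ^ m * exp (A + B * v)) (u + α) := by
  have hsym : u - α - conj (u - α) = u + α - conj (u + α) := by
    simp only [map_sub, map_add, conj_ofReal]; ring
  rw [reflectedPairNorm_monomial_mul_exp, reflectedPairNorm_monomial_mul_exp, hsym]
  gcongr
  exact norm_sub_ofReal_le_norm_add_ofReal hu hα

lemma mul_prod_range_mul_le {c d : ℝ} {f g : ℕ → ℝ} (hc : 0 ≤ c) (hcd : c ≤ d)
    (hf : ∀ n, 0 ≤ f n) (hfg : ∀ n, f n ≤ g n) {N : ℕ} (hN : N ≠ 0) :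
    c * (∏ n ∈ range N, f n) * g 0 ≤ d * (∏ n ∈ range N, g n) * f 0 := by
  obtain ⟨N, rfl⟩ := Nat.exists_eq_succ_of_ne_zero hN
  rw [prod_range_succ', prod_range_succ']
  calc c * ((∏ n ∈ range N, f (n + 1)) * f 0) * g 0
      = c * (∏ n ∈ range N, f (n + 1)) * (f 0 * g 0) := by ring
    _ ≤ d * (∏ n ∈ range N, g (n + 1)) * (f 0 * g 0) :=
      mul_le_mul_of_nonneg_right
        (mul_le_mul hcd (prod_le_prod (fun n _ => hf (n + 1)) (fun n _ => hfg (n + 1)))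
          (prod_nonneg fun n _ => hf (n + 1)) (hc.trans hcd))
        (mul_nonneg (hf 0) ((hf 0).trans (hfg 0)))
    _ = d * ((∏ n ∈ range N, g (n + 1)) * g 0) * f 0 := by ring

lemma reflectedPairNorm_hadamardPartialProduct_mul_le (m : ℕ) (A B : ℂ) {z : ℕ → ℂ} {u : ℂ}
    {α : ℝ} (hz : ∀ n, z n ≠ 0) (hzα : ∀ n, |(z n).re| < α) (hu : 0 < u.re) {N : ℕ}
    (hN : N ≠ 0) :
    reflectedPairNorm (hadamardPartialProduct m A B z N) (u - α) *
        reflectedPairNorm (weierstrassFactor (z 0)) (u + α) ≤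
      reflectedPairNorm (hadamardPartialProduct m A B z N) (u + α) *
        reflectedPairNorm (weierstrassFactor (z 0)) (u - α) := by
  rw [reflectedPairNorm_hadamardPartialProduct, reflectedPairNorm_hadamardPartialProduct]
  exact mul_prod_range_mul_le (reflectedPairNorm_nonneg _ _)
    (reflectedPairNorm_monomial_mul_exp_le m A B hu.le ((abs_nonneg _).trans (hzα 0).le))
    (fun n => reflectedPairNorm_nonneg _ _)
    (fun n => (reflectedPairNorm_weierstrassFactor_lt (hz n) (hzα n) hu).le) hN

lemma lt_of_tendsto_of_eventually_mul_le_mul {ι : Type*} {l : Filter ι} [l.NeBot]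
    {X Y : ι → ℝ} {x y c d : ℝ} (hX : Tendsto X l (𝓝 x)) (hY : Tendsto Y l (𝓝 y))
    (hXY : ∀ᶠ i in l, X i * c ≤ Y i * d) (hd : 0 ≤ d) (hdc : d < c) (hy : 0 < y) : x < y := by
  have hle : x * c ≤ y * d := le_of_tendsto_of_tendsto (hX.mul_const c) (hY.mul_const d) hXY
  exact lt_of_mul_lt_mul_right (hle.trans_lt (mul_lt_mul_of_pos_left hdc hy)) (hd.trans hdc.le)

lemma tendsto_reflectedPairNorm_hadamardPartialProduct {h : ℂ → ℂ} {a : ℝ} {m : ℕ} {A B : ℂ}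
    {z : ℕ → ℂ} (hfact : ∀ s, Tendsto (fun N => hadamardPartialProduct m A B z N (s - a)) atTop
      (𝓝 (h s)))
    (hrefl : ∀ s, ‖h (2 * a - conj s)‖ = ‖h s‖) (s : ℂ) :
    Tendsto (fun N => reflectedPairNorm (hadamardPartialProduct m A B z N) (s - a)) atTop
      (𝓝 (‖h s‖ ^ 2)) := by
  have hreflect : -conj (s - a) = 2 * a - conj s - a := by
    rw [map_sub, conj_ofReal]; ring
  have hpair := (hfact s).norm.mul (hfact (2 * a - conj s)).norm
  rwa [hrefl, ← sq, ← hreflect] at hpair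

theorem stmt_15_general (a b : ℝ) (h : ℂ → ℂ) (ε : ℂ)
    (hε : ε = 1 ∨ ε = -1)
    (hdiff : Differentiable ℂ h)
    (hzeros : ∀ s : ℂ, h s = 0 → |s.re - a| < b)
    (hreal : ∀ x : ℝ, (h (x : ℂ)).im = 0)
    (hfe : ∀ s : ℂ, h (2 * a - s) = ε * h s)
    (m : ℕ) (A B : ℂ) (ρ : ℕ → ℂ)
    (hρne : ∀ n, ρ n ≠ (a : ℂ))
    (hρzero : ∀ n, h (ρ n) = 0)
    (hfact : ∀ s : ℂ, Tendsto
      (fun N => (s - a) ^ m * Complex.exp (A + B * (s - a)) *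
        ∏ n ∈ Finset.range N,
          ((1 - (s - a) / (ρ n - a)) * Complex.exp ((s - a) / (ρ n - a))))
      atTop (nhds (h s)))
    (α : ℝ) (hα : b ≤ α) :
    ∀ s : ℂ, a < s.re →
      ‖h (s - α)‖ < ‖h (s + α)‖ := by
  intro s hs
  set z : ℕ → ℂ := fun n => ρ n - a
  have hz (n : ℕ) : z n ≠ 0 := sub_ne_zero.2 (hρne n)
  have hzα (n : ℕ) : |(z n).re| < α := by
    simpa [z] using (hzeros _ (hρzero n)).trans_le hα
  have hu : 0 < (s - a).re := by simpa using hs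
  have hrefl (w : ℂ) : ‖h (2 * a - conj w)‖ = ‖h w‖ := by
    rw [hfe, hdiff.apply_conj_of_forall_im_eq_zero hreal]
    rcases hε with rfl | rfl <;> simp
  have hlim := tendsto_reflectedPairNorm_hadamardPartialProduct (z := z) hfact hrefl
  have hminus := hlim (s - α)
  have hplus := hlim (s + α)
  rw [sub_right_comm] at hminus
  rw [add_sub_right_comm] at hplus
  have hne : h (s + α) ≠ 0 := fun h0 => by
    have := (abs_lt.1 (hzeros _ h0)).2
    simp only [add_re, ofReal_re] at this
    linarith
  have hsq : ‖h (s - α)‖ ^ 2 < ‖h (s + α)‖ ^ 2 :=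
    lt_of_tendsto_of_eventually_mul_le_mul hminus hplus
      ((eventually_ne_atTop 0).mono fun N hN =>
        reflectedPairNorm_hadamardPartialProduct_mul_le m A B hz hzα hu hN)
      (reflectedPairNorm_nonneg _ _) (reflectedPairNorm_weierstrassFactor_lt (hz 0) (hzα 0) hu)
      (pow_pos (norm_pos_iff.2 hne) 2)
  exact lt_of_pow_lt_pow_left₀ 2 (norm_nonneg _) hsq

theorem stmt_15 (a b : ℝ) (hb : 0 < b) (h : ℂ → ℂ) (ε : ℂ)
    (hε : ε = 1 ∨ ε = -1)
    (hdiff : Differentiable ℂ h)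
    (hzeros : ∀ s : ℂ, h s = 0 → |s.re - a| < b)
    (hreal : ∀ x : ℝ, (h (x : ℂ)).im = 0)
    (hfe : ∀ s : ℂ, h (2 * a - s) = ε * h s)
    (m : ℕ) (A B : ℂ) (ρ : ℕ → ℂ)
    (hρne : ∀ n, ρ n ≠ (a : ℂ))
    (hρzero : ∀ n, h (ρ n) = 0)
    (hsum : Summable fun n => 1 / ‖ρ n - a‖ ^ 2)
    (hfact : ∀ s : ℂ, Tendsto
      (fun N => (s - a) ^ m * Complex.exp (A + B * (s - a)) *
        ∏ n ∈ Finset.range N,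
          ((1 - (s - a) / (ρ n - a)) * Complex.exp ((s - a) / (ρ n - a))))
      atTop (nhds (h s)))
    (α : ℝ) (hα : b ≤ α) :
    ∀ s : ℂ, a < s.re →
      ‖h (s - α)‖ < ‖h (s + α)‖ :=
  stmt_15_general a b h ε hε hdiff hzeros hreal hfe m A B ρ hρne hρzero hfact α hα
end

section
/- Let g : [0,∞) → ℝ be continuous with g(0) ≤ 0, and suppose among the points 0 ≤ x₁ < ⋯ < xₙ < T where g takes integer values there are k indices i with 1 < i ≤ n and g(xᵢ) ≤ g(x_{i−1}) (decreasing integer-value points). Then the number of integer-value points of g in [0,T) satisfies g̃(T) ≥ g(T) + k. -/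
private lemma cross_aux (g : ℝ → ℝ) (a b c : ℝ) (hab : a ≤ b)
    (hc : ContinuousOn g (Set.Icc a b)) (h1 : g a < c) (h2 : c < g b) :
    ∃ s, a < s ∧ s < b ∧ g s = c := by
  obtain ⟨s, hs, hgs⟩ := intermediate_value_Ioo hab hc ⟨h1, h2⟩
  exact ⟨s, hs.1, hs.2, hgs⟩

theorem stmt_18 (g : ℝ → ℝ) (T : ℝ) (hT : 0 < T)
    (hc : ContinuousOn g (Set.Ici 0)) (h0 : g 0 ≤ 0)
    (n k : ℕ) (x : ℕ → ℝ)
    (hmono : StrictMonoOn x (Set.Iio n))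
    (hrange : Set.Ico (0 : ℝ) T ∩ {t | ∃ m : ℤ, g t = m} = x '' Set.Iio n)
    (hk : k = ((Finset.Ioo 0 n).filter fun i => g (x i) ≤ g (x (i - 1))).card) :
    g T + k ≤ n := by
  have hmem : ∀ j, j < n → (0 ≤ x j ∧ x j < T ∧ ∃ m : ℤ, g (x j) = m) := by
    intro j hj
    have : x j ∈ Set.Ico (0:ℝ) T ∩ {t | ∃ m : ℤ, g t = m} := by
      rw [hrange]; exact ⟨j, hj, rfl⟩
    exact ⟨this.1.1, this.1.2, this.2⟩
  have hpt : ∀ t, 0 ≤ t → t < T → (∃ m : ℤ, g t = m) → ∃ j, j < n ∧ x j = t := by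
    intro t h0t htT hm
    have : t ∈ x '' Set.Iio n := by rw [← hrange]; exact ⟨⟨h0t, htT⟩, hm⟩
    obtain ⟨j, hj, hjt⟩ := this; exact ⟨j, hj, hjt⟩
  rcases Nat.eq_zero_or_pos n with hn | hn
  · subst hn
    have hk0 : k = 0 := by simp [hk]
    subst hk0
    have hg0 : g 0 < 0 := by
      rcases lt_or_eq_of_le h0 with h' | h'
      · exact h'
      · exfalso
        obtain ⟨j, hj, _⟩ := hpt 0 le_rfl hT ⟨0, by rw [h']; norm_num⟩
        exact Nat.not_lt_zero j hj
    have hgT : g T ≤ 0 := by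
      by_contra h
      push_neg at h
      obtain ⟨s, h1, h2, h3⟩ := cross_aux g 0 T 0 hT.le
        (hc.mono (fun t ht => ht.1)) hg0 h
      obtain ⟨j, hj, _⟩ := hpt s h1.le h2 ⟨0, by rw [h3]; simp⟩
      exact Nat.not_lt_zero j hj
    simpa using hgT
  · obtain ⟨N, rfl⟩ : ∃ N, n = N + 1 := ⟨n - 1, (Nat.succ_pred_eq_of_pos hn).symm⟩
    -- between consecutive points, jump ≤ 1, and ≤ 0 if decreasing
    have hterm : ∀ i ∈ Finset.range N,
        g (x (i+1)) - g (x i) ≤ 1 - (if g (x (i+1)) ≤ g (x i) then (1:ℝ) else 0) := by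
      intro i hi
      rw [Finset.mem_range] at hi
      have hi1 : i < N + 1 := by omega
      have hi2 : i + 1 < N + 1 := by omega
      split_ifs with hdec
      · linarith
      · push_neg at hdec
        simp only [sub_zero]
        obtain ⟨hx0, hxT, m, hm⟩ := hmem i hi1
        obtain ⟨hx0', hxT', m', hm'⟩ := hmem (i+1) hi2
        by_contra hcon
        push_neg at hcon
        have hlt : x i < x (i+1) := hmono hi1 hi2 (by omega)
        have hcont : ContinuousOn g (Set.Icc (x i) (x (i+1))) :=
          hc.mono (fun t ht => le_trans hx0 ht.1)
        obtain ⟨s, hs1, hs2, hs3⟩ := cross_aux g (x i) (x (i+1)) (↑m + 1) hlt.le hcont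
          (by rw [hm]; norm_num) (by rw [hm']; rw [hm] at hcon; linarith)
        obtain ⟨j, hj, hjx⟩ := hpt s (le_trans hx0 hs1.le) (lt_trans hs2 hxT')
          ⟨m + 1, by push_cast; exact hs3⟩
        have h1 : i < j := by
          have := (hmono.lt_iff_lt (a := i) (b := j) hi1 hj).mp (by rw [hjx]; exact hs1)
          exact this
        have h2 : j < i + 1 := by
          exact (hmono.lt_iff_lt (a := j) (b := i+1) hj hi2).mp (by rw [hjx]; exact hs2)
        omega
    -- g (x 0) ≤ 0
    have h0N : (0:ℕ) < N + 1 := by omega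
    have hx00 : 0 ≤ x 0 := (hmem 0 h0N).1
    have hx0 : g (x 0) ≤ 0 := by
      by_contra hpos
      push_neg at hpos
      by_cases hint : ∃ m : ℤ, g 0 = m
      · obtain ⟨j, hj, hjx⟩ := hpt 0 le_rfl hT hint
        have hle : x 0 ≤ x j := hmono.monotoneOn h0N hj (Nat.zero_le j)
        have : x 0 = 0 := le_antisymm (by rw [hjx] at hle; exact hle) hx00
        rw [this] at hpos; linarith
      · have hg0 : g 0 < 0 := by
          rcases lt_or_eq_of_le h0 with h' | h'
          · exact h'
          · exact absurd ⟨0, by rw [h']; norm_num⟩ hint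
        have hx0pos : 0 < x 0 := by
          rcases lt_or_eq_of_le hx00 with h' | h'
          · exact h'
          · exfalso; rw [← h'] at hpos; linarith
        obtain ⟨s, hs1, hs2, hs3⟩ := cross_aux g 0 (x 0) 0 hx00
          (hc.mono (fun t ht => ht.1)) hg0 hpos
        obtain ⟨j, hj, hjx⟩ := hpt s hs1.le (lt_trans hs2 (hmem 0 h0N).2.1)
          ⟨0, by rw [hs3]; simp⟩
        have : j < 0 := (hmono.lt_iff_lt (a := j) (b := 0) hj h0N).mp
          (by rw [hjx]; exact hs2)
        omega
    -- g T ≤ g (x N) + 1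
    have hNmem := hmem N (by omega)
    have hT1 : g T ≤ g (x N) + 1 := by
      by_contra hbad
      push_neg at hbad
      obtain ⟨hxN0, hxNT, m, hm⟩ := hNmem
      obtain ⟨s, hs1, hs2, hs3⟩ := cross_aux g (x N) T (↑m + 1) hxNT.le
        (hc.mono (fun t ht => le_trans hxN0 ht.1))
        (by rw [hm]; norm_num) (by rw [hm] at hbad; linarith)
      obtain ⟨j, hj, hjx⟩ := hpt s (le_trans hxN0 hs1.le) hs2
        ⟨m + 1, by push_cast; exact hs3⟩
      have : N < j := (hmono.lt_iff_lt (a := N) (b := j) (Set.mem_Iio.mpr (by omega)) hj).mp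
        (by rw [hjx]; exact hs1)
      omega
    -- relate k to count over range N
    have hkk : k = ((Finset.range N).filter fun i => g (x (i+1)) ≤ g (x i)).card := by
      rw [hk]
      refine Finset.card_bij' (fun i _ => i - 1) (fun i _ => i + 1) ?_ ?_ ?_ ?_
      · intro a ha
        simp only [Finset.mem_filter, Finset.mem_Ioo] at ha
        simp only [Finset.mem_filter, Finset.mem_range]
        constructor
        · omega
        · have : a - 1 + 1 = a := by omega
          rw [this]; exact ha.2
      · intro a ha
        simp only [Finset.mem_filter, Finset.mem_range] at ha
        simp only [Finset.mem_filter, Finset.mem_Ioo]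
        refine ⟨⟨by omega, by omega⟩, ?_⟩
        have : a + 1 - 1 = a := by omega
        rw [this]; exact ha.2
      · intro a ha
        simp only [Finset.mem_filter, Finset.mem_Ioo] at ha
        show a - 1 + 1 = a
        omega
      · intro a _
        show a + 1 - 1 = a
        omega
    -- telescoping
    have htel : g (x N) - g (x 0) = ∑ i ∈ Finset.range N, (g (x (i+1)) - g (x i)) :=
      (Finset.sum_range_sub (fun i => g (x i)) N).symm
    have hsum : ∑ i ∈ Finset.range N, (g (x (i+1)) - g (x i)) ≤ (N : ℝ) - k := by
      calc ∑ i ∈ Finset.range N, (g (x (i+1)) - g (x i))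
          ≤ ∑ i ∈ Finset.range N,
              (1 - (if g (x (i+1)) ≤ g (x i) then (1:ℝ) else 0)) :=
            Finset.sum_le_sum hterm
        _ = (N : ℝ) - k := by
            rw [Finset.sum_sub_distrib, Finset.sum_const, Finset.sum_boole,
              Finset.card_range, hkk]
            simp
    push_cast
    have := htel ▸ hsum
    linarith
end

section
/- For a stable real polynomial p of degree n (all roots with negative real part, positive leading coefficient), write p(z) = 2q(z²) + 2z·r(z²) with q, r real polynomials (the even and odd parts). Then all roots of the polynomial f(s) = p(s) − p(−s) = 4s·r(s²), apart from s = 0, are purely imaginary; equivalently all roots of r are real and negative. -/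
/-!
If `Re z > 0`, every root `ρ` of `p` (which has `Re ρ < 0`) is strictly closer to `-z̄` than to
`z`, so `‖p(-z)‖ = ‖p(-z̄)‖ < ‖p(z)‖` since `p` is real; hence `p(z) = p(-z)` forces `Re z = 0`.
A root `w ≠ 0` of `r` is `w = z²` with `p(z) = p(-z)`, so `z` is purely imaginary and `w < 0`.
Finally `r(0) = p'(0) ≠ 0`, because by Gauss–Lucas the roots of `p'` also lie in the open left
half-plane.
-/

open Polynomial ComplexConjugate

theorem Complex.norm_neg_conj_sub_lt_norm_sub {z ρ : ℂ} (hz : 0 < z.re) (hρ : ρ.re < 0) :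
    ‖-conj z - ρ‖ < ‖z - ρ‖ := by
  rw [← sq_lt_sq₀ (norm_nonneg _) (norm_nonneg _), ← normSq_eq_norm_sq, ← normSq_eq_norm_sq]
  simp only [normSq_apply, sub_re, sub_im, neg_re, neg_im, conj_re, conj_im]
  nlinarith [mul_pos hz (neg_pos.2 hρ)]

namespace Polynomial

theorem norm_eval_neg_conj_lt_norm_eval {P : ℂ[X]} (hP : 0 < P.natDegree)
    (hroots : ∀ ρ, P.IsRoot ρ → ρ.re < 0) {z : ℂ} (hz : 0 < z.re) :
    ‖P.eval (-conj z)‖ < ‖P.eval z‖ := by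
  have hPz : P.eval z ≠ 0 := fun h => (hroots z h).not_gt hz
  by_cases h : P.eval (-conj z) = 0
  · simpa [h] using hPz
  have hs := IsAlgClosed.splits P
  have hlc : 0 < ‖P.leadingCoeff‖ := by
    simpa using leadingCoeff_ne_zero.2 (ne_zero_of_natDegree_gt hP)
  rw [hs.eval_eq_prod_roots, mul_eq_zero, not_or, Multiset.prod_eq_zero_iff] at h
  have hnorm (s : Multiset ℂ) : ‖s.prod‖ = (s.map (‖·‖)).prod := map_multiset_prod normHom s
  rw [hs.eval_eq_prod_roots, hs.eval_eq_prod_roots, norm_mul, norm_mul, hnorm, hnorm,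
    Multiset.map_map, Multiset.map_map]
  refine mul_lt_mul_of_pos_left (Multiset.prod_map_lt_prod_map ?_ _ _ (fun ρ hρ => ?_)
    (fun ρ hρ => ?_)) hlc
  · exact hs.roots_ne_zero hP.ne'
  · exact norm_pos_iff.2 fun h0 => h.2 (Multiset.mem_map.2 ⟨ρ, hρ, h0⟩)
  · exact Complex.norm_neg_conj_sub_lt_norm_sub hz (hroots ρ (isRoot_of_mem_roots hρ))

theorem re_eq_zero_of_aeval_eq_aeval_neg {p : ℝ[X]} (hp : 0 < p.natDegree)
    (hstable : ∀ ρ : ℂ, aeval ρ p = 0 → ρ.re < 0) {z : ℂ} (hz : aeval z p = aeval (-z) p) :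
    z.re = 0 := by
  have hlt (w : ℂ) (hw : 0 < w.re) : ‖aeval (-w) p‖ < ‖aeval w p‖ := by
    rw [← Complex.norm_conj, ← aeval_conj, map_neg, ← eval_map_algebraMap, ← eval_map_algebraMap]
    exact norm_eval_neg_conj_lt_norm_eval (by rwa [natDegree_map])
      (by simpa [eval_map_algebraMap] using hstable) hw
  rcases lt_trichotomy z.re 0 with h | h | h
  · have := hlt (-z) (by simpa using h)
    rw [neg_neg, hz] at this
    exact (lt_irrefl _ this).elim
  · exact h
  · exact (lt_irrefl _ (hz ▸ hlt z h)).elim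

theorem re_lt_zero_of_isRoot_derivative {P : ℂ[X]} (hP : 0 < P.degree)
    (hroots : ∀ ρ, P.IsRoot ρ → ρ.re < 0) {z : ℂ} (hz : P.derivative.IsRoot z) : z.re < 0 := by
  have hP' : P.derivative ≠ 0 := fun h0 =>
    (natDegree_pos_iff_degree_pos.2 hP).ne' (derivative_eq_zero.1 h0)
  have hsub : P.rootSet ℂ ⊆ {w : ℂ | w.re < 0} := fun ρ hρ =>
    hroots ρ (by simpa using (mem_rootSet.1 hρ).2)
  exact (convex_halfSpace_re_lt 0).convexHull_subset_iff.2 hsub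
    (rootSet_derivative_subset_convexHull_rootSet hP (mem_rootSet.2 ⟨hP', by simpa using hz⟩))

theorem eval_derivative_zero_eq_of_odd_part {K : Type*} [Field K] [CharZero K] {f g : K[X]}
    (h : ∀ x, f.eval x - f.eval (-x) = 2 * x * g.eval (x ^ 2)) :
    f.derivative.eval 0 = g.eval 0 := by
  have hid : f - f.comp (-X) = C 2 * X * g.comp (X ^ 2) := funext fun x => by simp [h x]
  have h2 : 2 * f.derivative.eval 0 = 2 * g.eval 0 := by
    simpa [derivative_comp, two_mul] using congrArg (fun s => (derivative s).eval 0) hid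
  exact mul_left_cancel₀ two_ne_zero h2

end Polynomial

theorem stmt_19_general (p r : Polynomial ℝ)
    (hdeg : 1 ≤ p.natDegree)
    (hstable : ∀ ρ : ℂ, (Polynomial.aeval ρ) p = 0 → ρ.re < 0)
    (hr : ∀ z : ℂ, (Polynomial.aeval z) p - (Polynomial.aeval (-z)) p =
      2 * z * (Polynomial.aeval (z ^ 2)) r) :
    (∀ z : ℂ, z ≠ 0 → (Polynomial.aeval z) p - (Polynomial.aeval (-z)) p = 0 → z.re = 0) ∧
    (∀ z : ℂ, (Polynomial.aeval z) r = 0 → ∃ x : ℝ, x < 0 ∧ z = (x : ℂ)) := by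
  have hsym (z : ℂ) (hz : aeval z p - aeval (-z) p = 0) : z.re = 0 :=
    re_eq_zero_of_aeval_eq_aeval_neg hdeg hstable (sub_eq_zero.1 hz)
  refine ⟨fun z _ => hsym z, fun w hw => ?_⟩
  rcases eq_or_ne w 0 with rfl | hw0
  · have h0 := re_lt_zero_of_isRoot_derivative (P := p.map (algebraMap ℝ ℂ)) (z := 0)
      (by rw [degree_map]; exact natDegree_pos_iff_degree_pos.1 hdeg)
      (by simpa [eval_map_algebraMap] using hstable)
      (by
        rw [IsRoot, eval_derivative_zero_eq_of_odd_part (g := r.map (algebraMap ℝ ℂ))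
          (by simpa [eval_map_algebraMap] using hr), eval_map_algebraMap, hw])
    simp at h0
  · obtain ⟨z, rfl⟩ := IsAlgClosed.exists_pow_nat_eq w two_pos
    have hz0 : z ≠ 0 := by rintro rfl; simp at hw0
    have hre := hsym z (by rw [hr, hw, mul_zero])
    have him : z.im ≠ 0 := fun h => hz0 (Complex.ext hre h)
    refine ⟨-z.im ^ 2, by simpa [sq_pos_iff] using him, Complex.ext ?_ ?_⟩ <;> simp [sq, hre]

theorem stmt_19 (p q r : Polynomial ℝ)
    (hdeg : 1 ≤ p.natDegree) (hlead : 0 < p.leadingCoeff)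
    (hstable : ∀ ρ : ℂ, (Polynomial.aeval ρ) p = 0 → ρ.re < 0)
    (hq : ∀ z : ℂ, (Polynomial.aeval z) p + (Polynomial.aeval (-z)) p =
      2 * (Polynomial.aeval (z ^ 2)) q)
    (hr : ∀ z : ℂ, (Polynomial.aeval z) p - (Polynomial.aeval (-z)) p =
      2 * z * (Polynomial.aeval (z ^ 2)) r) :
    (∀ z : ℂ, z ≠ 0 → (Polynomial.aeval z) p - (Polynomial.aeval (-z)) p = 0 → z.re = 0) ∧
    (∀ z : ℂ, (Polynomial.aeval z) r = 0 → ∃ x : ℝ, x < 0 ∧ z = (x : ℂ)) :=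
  stmt_19_general p r hdeg hstable hr
end
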